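/- For any family of weights α₁,…,αₙ ∈ F with Σ_{i=1}^{n} α_i = 0, the α-deformed one-loop scattering equations satisfy the three SL(2)/Möbius identities: E₊ + E₋ + Σ_{i=1}^{n} E_i = 0, σ₊E₊ + σ₋E₋ + Σ_{i=1}^{n} σ_iE_i = 0, and σ₊²E₊ + σ₋²E₋ + Σ_{i=1}^{n} σ_i²E_i = 0. (The identities for m = 0 and m = 1 hold for arbitrary weights; the condition Σ_i α_i = 0 is used for the m = 2 identity.) -/
import Mathlib


open Finset

/-- The α-deformed coefficients of the one-loop scattering equations:
`c_i = 2ℓ·k_i + α_i (ℓ·ℓ)`. -/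
noncomputable def alphaCoeff {F V : Type*} [Field F] [AddCommGroup V] [Module F V]
    (B : LinearMap.BilinForm F V) {n : ℕ} (k : Fin n → V) (ℓ : V)
    (α : Fin n → F) (i : Fin n) : F :=
  2 * B ℓ (k i) + α i * B ℓ ℓ

/-- The α-deformed one-loop scattering equation attached to the external marked point `σ i`. -/
noncomputable def scatEqExt {F V : Type*} [Field F] [AddCommGroup V] [Module F V]
    (B : LinearMap.BilinForm F V) {n : ℕ} (k : Fin n → V) (ℓ : V) (α : Fin n → F)
    (σ : Fin n → F) (σp σm : F) (i : Fin n) : F :=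
  (∑ j ∈ univ.filter (· ≠ i), 2 * B (k i) (k j) / (σ i - σ j))
    + alphaCoeff B k ℓ α i * (σp - σm) / ((σ i - σp) * (σ i - σm))

/-- The α-deformed one-loop scattering equation attached to the node point `σ₊`. -/
noncomputable def scatEqPlus {F V : Type*} [Field F] [AddCommGroup V] [Module F V]
    (B : LinearMap.BilinForm F V) {n : ℕ} (k : Fin n → V) (ℓ : V) (α : Fin n → F)
    (σ : Fin n → F) (σp : F) : F :=
  ∑ j, alphaCoeff B k ℓ α j / (σp - σ j)

/-- The α-deformed one-loop scattering equation attached to the node point `σ₋`. -/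
noncomputable def scatEqMinus {F V : Type*} [Field F] [AddCommGroup V] [Module F V]
    (B : LinearMap.BilinForm F V) {n : ℕ} (k : Fin n → V) (ℓ : V) (α : Fin n → F)
    (σ : Fin n → F) (σm : F) : F :=
  - ∑ j, alphaCoeff B k ℓ α j / (σm - σ j)

lemma sum_filter_swap {M : Type*} [AddCommMonoid M] {n : ℕ} (f : Fin n → Fin n → M) :
    ∑ i, ∑ j ∈ univ.filter (· ≠ i), f i j = ∑ i, ∑ j ∈ univ.filter (· ≠ i), f j i := by
  rw [Finset.sum_comm' (s' := fun j => univ.filter (· ≠ j)) (t' := univ)]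
  intro x y
  simp [ne_comm]

lemma double_eq_zero {F : Type*} [Field F] [CharZero F] {a : F} (h : a + a = 0) : a = 0 := by
  have h2 : (2 : F) * a = 0 := by rw [two_mul]; exact h
  rcases mul_eq_zero.mp h2 with h | h
  · exact absurd h two_ne_zero
  · exact h

/-- For any weights `α` with `∑ α_i = 0`, under momentum conservation the α-deformed one-loop
scattering equations satisfy the three SL(2)/Möbius identities `∑ σ_a^m E_a = 0`, `m = 0,1,2`. -/
theorem alpha_deformed_scattering_equations_moebius_identities
    {F V : Type*} [Field F] [CharZero F] [AddCommGroup V] [Module F V]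
    (B : LinearMap.BilinForm F V) (hsymm : ∀ u v : V, B u v = B v u)
    {n : ℕ} (hn : 2 ≤ n) (k : Fin n → V) (ℓ : V) (σ : Fin n → F) (σp σm : F)
    (hinj : Function.Injective σ)
    (hp : ∀ i, σ i ≠ σp) (hm : ∀ i, σ i ≠ σm) (hpm : σp ≠ σm)
    (hmomk : ∀ i : Fin n, ∑ j ∈ univ.filter (· ≠ i), 2 * B (k i) (k j) = 0)
    (hmoml : ∑ j : Fin n, 2 * B ℓ (k j) = 0)
    (α : Fin n → F) (hα : ∑ i, α i = 0) :
    scatEqPlus B k ℓ α σ σp + scatEqMinus B k ℓ α σ σm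
        + ∑ i, scatEqExt B k ℓ α σ σp σm i = 0
    ∧ σp * scatEqPlus B k ℓ α σ σp + σm * scatEqMinus B k ℓ α σ σm
        + ∑ i, σ i * scatEqExt B k ℓ α σ σp σm i = 0
    ∧ σp ^ 2 * scatEqPlus B k ℓ α σ σp + σm ^ 2 * scatEqMinus B k ℓ α σ σm
        + ∑ i, σ i ^ 2 * scatEqExt B k ℓ α σ σp σm i = 0 := by
  classical
  have hcsum : ∑ i, alphaCoeff B k ℓ α i = 0 := by
    simp only [alphaCoeff, Finset.sum_add_distrib, ← Finset.sum_mul, hα, zero_mul,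
      add_zero, hmoml]
  have hne : ∀ i j : Fin n, j ≠ i → σ i - σ j ≠ 0 := by
    intro i j h
    exact sub_ne_zero.2 fun e => h (hinj e.symm)
  have hip : ∀ i, σ i - σp ≠ 0 := fun i => sub_ne_zero.2 (hp i)
  have him : ∀ i, σ i - σm ≠ 0 := fun i => sub_ne_zero.2 (hm i)
  have hpi : ∀ i, σp - σ i ≠ 0 := fun i => sub_ne_zero.2 fun e => hp i e.symm
  have hmi : ∀ i, σm - σ i ≠ 0 := fun i => sub_ne_zero.2 fun e => hm i e.symm
  -- pairwise parts
  have hpair0 : ∑ i, ∑ j ∈ univ.filter (· ≠ i), 2 * B (k i) (k j) / (σ i - σ j) = 0 := by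
    apply double_eq_zero
    have h1 := sum_filter_swap (fun i j => 2 * B (k i) (k j) / (σ i - σ j))
    nth_rewrite 2 [h1]
    rw [← Finset.sum_add_distrib]
    apply Finset.sum_eq_zero
    intro i _
    rw [← Finset.sum_add_distrib]
    apply Finset.sum_eq_zero
    intro j hj
    have hj' : j ≠ i := by simpa using hj
    rw [hsymm (k j) (k i)]
    have h := hne i j hj'
    have h' := hne j i hj'.symm
    rw [div_add_div _ _ h h']
    exact div_eq_zero_iff.mpr (Or.inl (by ring))
  have hpair1 : ∑ i, ∑ j ∈ univ.filter (· ≠ i),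
      σ i * (2 * B (k i) (k j) / (σ i - σ j)) = 0 := by
    apply double_eq_zero
    have h1 := sum_filter_swap (fun i j => σ i * (2 * B (k i) (k j) / (σ i - σ j)))
    nth_rewrite 2 [h1]
    rw [← Finset.sum_add_distrib]
    have : ∀ i ∈ univ, (∑ j ∈ univ.filter (· ≠ i), σ i * (2 * B (k i) (k j) / (σ i - σ j)))
        + (∑ j ∈ univ.filter (· ≠ i), σ j * (2 * B (k j) (k i) / (σ j - σ i)))
        = ∑ j ∈ univ.filter (· ≠ i), 2 * B (k i) (k j) := by
      intro i _
      rw [← Finset.sum_add_distrib]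
      apply Finset.sum_congr rfl
      intro j hj
      have hj' : j ≠ i := by simpa using hj
      rw [hsymm (k j) (k i)]
      have h := hne i j hj'
      have h' := hne j i hj'.symm
      field_simp
      ring
    rw [Finset.sum_congr rfl this]
    exact Finset.sum_eq_zero fun i _ => hmomk i
  have hpair2 : ∑ i, ∑ j ∈ univ.filter (· ≠ i),
      σ i ^ 2 * (2 * B (k i) (k j) / (σ i - σ j)) = 0 := by
    apply double_eq_zero
    have h1 := sum_filter_swap (fun i j => σ i ^ 2 * (2 * B (k i) (k j) / (σ i - σ j)))
    nth_rewrite 2 [h1]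
    rw [← Finset.sum_add_distrib]
    have key : ∀ i ∈ univ, (∑ j ∈ univ.filter (· ≠ i), σ i ^ 2 * (2 * B (k i) (k j) / (σ i - σ j)))
        + (∑ j ∈ univ.filter (· ≠ i), σ j ^ 2 * (2 * B (k j) (k i) / (σ j - σ i)))
        = ∑ j ∈ univ.filter (· ≠ i), (σ i * (2 * B (k i) (k j)) + σ j * (2 * B (k i) (k j))) := by
      intro i _
      rw [← Finset.sum_add_distrib]
      apply Finset.sum_congr rfl
      intro j hj
      have hj' : j ≠ i := by simpa using hj
      rw [hsymm (k j) (k i)]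
      have h := hne i j hj'
      have h' := hne j i hj'.symm
      field_simp
      ring
    rw [Finset.sum_congr rfl key]
    have split : ∑ i, ∑ j ∈ univ.filter (· ≠ i),
        (σ i * (2 * B (k i) (k j)) + σ j * (2 * B (k i) (k j)))
        = (∑ i, ∑ j ∈ univ.filter (· ≠ i), σ i * (2 * B (k i) (k j)))
          + ∑ i, ∑ j ∈ univ.filter (· ≠ i), σ j * (2 * B (k i) (k j)) := by
      rw [← Finset.sum_add_distrib]
      exact Finset.sum_congr rfl fun i _ => Finset.sum_add_distrib
    rw [split]
    have e1 : ∑ i, ∑ j ∈ univ.filter (· ≠ i), σ i * (2 * B (k i) (k j)) = 0 := by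
      apply Finset.sum_eq_zero
      intro i _
      rw [← Finset.mul_sum, hmomk i, mul_zero]
    have e2 : ∑ i, ∑ j ∈ univ.filter (· ≠ i), σ j * (2 * B (k i) (k j)) = 0 := by
      rw [sum_filter_swap (fun i j => σ j * (2 * B (k i) (k j)))]
      apply Finset.sum_eq_zero
      intro i _
      have : ∀ j ∈ univ.filter (· ≠ i), σ i * (2 * B (k j) (k i)) = σ i * (2 * B (k i) (k j)) := by
        intro j _; rw [hsymm (k j) (k i)]
      rw [Finset.sum_congr rfl this, ← Finset.mul_sum, hmomk i, mul_zero]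
    rw [e1, e2, add_zero]
  have loopA : ∀ i, alphaCoeff B k ℓ α i / (σp - σ i) - alphaCoeff B k ℓ α i / (σm - σ i)
      + alphaCoeff B k ℓ α i * (σp - σm) / ((σ i - σp) * (σ i - σm)) = 0 := by
    intro i
    have h1 := hip i; have h2 := him i; have h3 := hpi i; have h4 := hmi i
    field_simp
    ring
  have loopB : ∀ i, σp * (alphaCoeff B k ℓ α i / (σp - σ i))
      - σm * (alphaCoeff B k ℓ α i / (σm - σ i))
      + σ i * (alphaCoeff B k ℓ α i * (σp - σm) / ((σ i - σp) * (σ i - σm))) = 0 := by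
    intro i
    have h1 := hip i; have h2 := him i; have h3 := hpi i; have h4 := hmi i
    field_simp
    ring
  have loopC : ∀ i, σp ^ 2 * (alphaCoeff B k ℓ α i / (σp - σ i))
      - σm ^ 2 * (alphaCoeff B k ℓ α i / (σm - σ i))
      + σ i ^ 2 * (alphaCoeff B k ℓ α i * (σp - σm) / ((σ i - σp) * (σ i - σm)))
      = alphaCoeff B k ℓ α i * (σp - σm) := by
    intro i
    have h1 := hip i; have h2 := him i; have h3 := hpi i; have h4 := hmi i
    field_simp
    ring
  refine ⟨?_, ?_, ?_⟩
  · have e0 : ∑ i, scatEqExt B k ℓ α σ σp σm i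
        = (∑ i, ∑ j ∈ univ.filter (· ≠ i), 2 * B (k i) (k j) / (σ i - σ j))
          + ∑ i, alphaCoeff B k ℓ α i * (σp - σm) / ((σ i - σp) * (σ i - σm)) := by
      rw [← Finset.sum_add_distrib]
      rfl
    rw [e0, hpair0, zero_add, scatEqPlus, scatEqMinus, ← sub_eq_add_neg,
      ← Finset.sum_sub_distrib, ← Finset.sum_add_distrib]
    apply Finset.sum_eq_zero
    intro i _
    simpa using loopA i
  · have e1 : ∑ i, σ i * scatEqExt B k ℓ α σ σp σm i
        = (∑ i, ∑ j ∈ univ.filter (· ≠ i), σ i * (2 * B (k i) (k j) / (σ i - σ j)))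
          + ∑ i, σ i * (alphaCoeff B k ℓ α i * (σp - σm) / ((σ i - σp) * (σ i - σm))) := by
      rw [← Finset.sum_add_distrib]
      apply Finset.sum_congr rfl
      intro i _
      rw [scatEqExt, mul_add, Finset.mul_sum]
    rw [e1, hpair1, zero_add, scatEqPlus, scatEqMinus, Finset.mul_sum, mul_neg,
      Finset.mul_sum, ← sub_eq_add_neg, ← Finset.sum_sub_distrib, ← Finset.sum_add_distrib]
    exact Finset.sum_eq_zero fun i _ => loopB i
  · have e2 : ∑ i, σ i ^ 2 * scatEqExt B k ℓ α σ σp σm i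
        = (∑ i, ∑ j ∈ univ.filter (· ≠ i), σ i ^ 2 * (2 * B (k i) (k j) / (σ i - σ j)))
          + ∑ i, σ i ^ 2 * (alphaCoeff B k ℓ α i * (σp - σm) / ((σ i - σp) * (σ i - σm))) := by
      rw [← Finset.sum_add_distrib]
      apply Finset.sum_congr rfl
      intro i _
      rw [scatEqExt, mul_add, Finset.mul_sum]
    rw [e2, hpair2, zero_add, scatEqPlus, scatEqMinus, Finset.mul_sum, mul_neg,
      Finset.mul_sum, ← sub_eq_add_neg, ← Finset.sum_sub_distrib, ← Finset.sum_add_distrib]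
    rw [Finset.sum_congr rfl fun i _ => loopC i, ← Finset.sum_mul, hcsum, zero_mul]
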